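/- arXiv:2005.08299 — 8 statements merged into one kernel-verified Lean document; each statement's English description precedes it below -/
import Mathlib

section
/- For all bounded linear operators A, B, X on a complex Hilbert space H, ‖A*AX‖ + ‖X B B*‖ ≥ 2‖AXB‖. -/
/-!
Put `T = A X B`. By the C⋆-identity and the equality of norm and spectral radius for the
self-adjoint element `T T*`, `‖T‖² = r(T T*)`. Since `r(uv) = r(vu)`, moving the trailing `A*`
of `T T* = (A X B B* X*) A*` to the front gives `r(T T*) = r((A* A X)(X B B*)*)
≤ ‖A* A X‖ ‖X B B*‖`, and the arithmetic-geometric mean inequality finishes the proof.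
-/

theorem spectralRadius_mul_comm {𝕜 R : Type*} [NormedField 𝕜] [Ring R] [Algebra 𝕜 R]
    (a b : R) : spectralRadius 𝕜 (a * b) = spectralRadius 𝕜 (b * a) := by
  have swap_le : ∀ u v : R, spectralRadius 𝕜 (u * v) ≤ spectralRadius 𝕜 (v * u) := by
    intro u v
    refine iSup₂_le fun k hk => ?_
    rcases eq_or_ne k 0 with rfl | hk0
    · simp
    · have hk' : k ∈ spectrum 𝕜 (v * u) :=
        (spectrum.nonzero_mul_comm (𝕜 := 𝕜) u v ▸ Set.mem_sdiff_singleton.mpr ⟨hk, hk0⟩).1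
      exact le_iSup₂ (α := ENNReal) k hk'
  exact (swap_le a b).antisymm (swap_le b a)

theorem CStarAlgebra.sq_norm_mul_mul_le {A : Type*} [CStarAlgebra A] (a x b : A) :
    ‖a * x * b‖ ^ 2 ≤ ‖star a * a * x‖ * ‖x * b * star b‖ := by
  nontriviality A
  set t := a * x * b
  set c := star a * a * x * star (x * b * star b)
  have hsr : spectralRadius ℂ (t * star t) = spectralRadius ℂ c := by
    rw [show t * star t = a * x * b * star b * star x * star a by
        simp only [t, star_mul, mul_assoc],
      spectralRadius_mul_comm]
    simp only [c, star_mul, star_star, mul_assoc]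
  have hnorm : ‖t * star t‖₊ ≤ ‖c‖₊ := by
    have := (IsSelfAdjoint.mul_star_self t).spectralRadius_eq_nnnorm ▸ hsr ▸
      spectrum.spectralRadius_le_nnnorm (𝕜 := ℂ) c
    exact_mod_cast this
  calc ‖t‖ ^ 2 = ‖t * star t‖ := by rw [CStarRing.norm_self_mul_star, sq]
    _ ≤ ‖c‖ := hnorm
    _ ≤ ‖star a * a * x‖ * ‖x * b * star b‖ := (norm_mul_le _ _).trans_eq (by rw [norm_star])

theorem agmi_sum (H : Type*) [NormedAddCommGroup H] [InnerProductSpace ℂ H]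
    [CompleteSpace H] (A B X : H →L[ℂ] H) :
    ‖(star A) * A * X‖ + ‖X * B * (star B)‖ ≥ 2 * ‖A * X * B‖ :=
  two_mul_le_add_of_sq_le_mul (norm_nonneg _) (norm_nonneg _)
    (CStarAlgebra.sq_norm_mul_mul_le A X B)
end

section
/- If S and R are invertible normal bounded operators on a complex Hilbert space H, then for every bounded operator X on H, ‖S X R⁻¹‖ + ‖S⁻¹ X R‖ ≥ 2‖X‖. -/
/-!
The C⋆-identity gives `‖x‖² = ‖x⋆x‖ = r(x⋆x)`, and the spectral radius is invariant under
conjugation, so `‖x‖² = r(R x⋆x R⁻¹) = r((R x⋆ S⁻¹)(S x R⁻¹)) ≤ ‖R x⋆ S⁻¹‖ ‖S x R⁻¹‖`.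
For normal `N` one has `‖N⋆ y‖ = ‖N y‖` and `‖y N⋆‖ = ‖y N‖`, so `‖R x⋆ S⁻¹‖ = ‖S⁻¹ x R‖`,
and the arithmetic–geometric mean inequality concludes.
-/

section CStarRing

variable {A : Type*} [NonUnitalNormedRing A] [StarRing A] [CStarRing A]

theorem IsStarNormal.norm_star_mul (a : A) [IsStarNormal a] (b : A) :
    ‖star a * b‖ = ‖a * b‖ := by
  have key : ‖star a * b‖ * ‖star a * b‖ = ‖a * b‖ * ‖a * b‖ := by
    rw [← CStarRing.norm_star_mul_self, ← CStarRing.norm_star_mul_self, star_mul, star_mul,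
      star_star, mul_assoc, ← mul_assoc a, ← star_comm_self' a, mul_assoc, ← mul_assoc (star b)]
  exact (mul_self_inj (norm_nonneg _) (norm_nonneg _)).mp key

theorem IsStarNormal.norm_mul_star (a : A) [IsStarNormal a] (b : A) :
    ‖b * star a‖ = ‖b * a‖ := by
  rw [← norm_star (b * star a), ← norm_star (b * a), star_mul, star_mul, star_star,
    IsStarNormal.norm_star_mul]

end CStarRing

section CStarAlgebra

variable {A : Type*} [CStarAlgebra A]

theorem norm_mul_self_le_norm_mul_norm_units_conj (s r : Aˣ) (x : A) :
    ‖x‖ * ‖x‖ ≤ ‖(r : A) * star x * ↑s⁻¹‖ * ‖(s : A) * x * ↑r⁻¹‖ := by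
  nontriviality A
  have hconj : (r : A) * star x * ↑s⁻¹ * ((s : A) * x * ↑r⁻¹) = r * (star x * x) * ↑r⁻¹ := by
    simp only [mul_assoc, Units.inv_mul_cancel_left]
  have hspec : spectralRadius ℂ ((r : A) * (star x * x) * ↑r⁻¹) = ‖star x * x‖₊ := by
    rw [spectralRadius, spectrum.units_conjugate, ← spectralRadius,
      (IsSelfAdjoint.star_mul_self x).spectralRadius_eq_nnnorm]
  have h : ‖star x * x‖₊ ≤ ‖(r : A) * star x * ↑s⁻¹‖₊ * ‖(s : A) * x * ↑r⁻¹‖₊ := by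
    rw [← ENNReal.coe_le_coe, ← hspec, ← hconj]
    exact (spectrum.spectralRadius_le_nnnorm _).trans
      (ENNReal.coe_le_coe.mpr (nnnorm_mul_le _ _))
  rw [← CStarRing.norm_star_mul_self]
  exact_mod_cast h

theorem two_mul_norm_le_norm_units_conj_add (s r : Aˣ) [IsStarNormal (s : A)]
    [IsStarNormal (r : A)] (x : A) :
    2 * ‖x‖ ≤ ‖(s : A) * x * ↑r⁻¹‖ + ‖(↑s⁻¹ : A) * x * r‖ := by
  have hnorm : ‖(r : A) * star x * ↑s⁻¹‖ = ‖(↑s⁻¹ : A) * x * r‖ := by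
    rw [← norm_star, star_mul, star_mul, IsStarNormal.norm_star_mul, ← mul_assoc,
      IsStarNormal.norm_mul_star, star_star]
  have h := norm_mul_self_le_norm_mul_norm_units_conj s r x
  rw [hnorm] at h
  nlinarith [sq_nonneg (‖(s : A) * x * ↑r⁻¹‖ - ‖(↑s⁻¹ : A) * x * r‖), norm_nonneg x,
    norm_nonneg ((s : A) * x * ↑r⁻¹), norm_nonneg ((↑s⁻¹ : A) * x * r)]

end CStarAlgebra

theorem normal_inv_agmi (H : Type*) [NormedAddCommGroup H] [InnerProductSpace ℂ H]
    [CompleteSpace H] (S R Sinv Rinv : H →L[ℂ] H)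
    (hS1 : S * Sinv = 1) (hS2 : Sinv * S = 1)
    (hR1 : R * Rinv = 1) (hR2 : Rinv * R = 1)
    (hS : (star S) * S = S * (star S)) (hR : (star R) * R = R * (star R))
    (X : H →L[ℂ] H) :
    ‖S * X * Rinv‖ + ‖Sinv * X * R‖ ≥ 2 * ‖X‖ := by
  let s : (H →L[ℂ] H)ˣ := ⟨S, Sinv, hS1, hS2⟩
  let r : (H →L[ℂ] H)ˣ := ⟨R, Rinv, hR1, hR2⟩
  have : IsStarNormal (s : H →L[ℂ] H) := ⟨hS⟩
  have : IsStarNormal (r : H →L[ℂ] H) := ⟨hR⟩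
  exact two_mul_norm_le_norm_units_conj_add s r X
end

section
/- If S and R are invertible bounded operators on a complex Hilbert space H, then for every bounded operator X on H, ‖S* X R⁻¹‖ + ‖S⁻¹ X R*‖ ≥ 2‖X‖. -/
open scoped NNReal ENNReal


theorem inv_adjoint_agmi (H : Type*) [NormedAddCommGroup H] [InnerProductSpace ℂ H]
    [CompleteSpace H] (S R Sinv Rinv : H →L[ℂ] H)
    (hS1 : S * Sinv = 1) (hS2 : Sinv * S = 1)
    (hR1 : R * Rinv = 1) (hR2 : Rinv * R = 1)
    (X : H →L[ℂ] H) :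
    ‖(star S) * X * Rinv‖ + ‖Sinv * X * (star R)‖ ≥ 2 * ‖X‖ := by
  rcases subsingleton_or_nontrivial H with hH | hH
  · have hX0 : X = 0 := Subsingleton.elim _ _
    simp [hX0]
  set a := (star S) * X * Rinv with ha
  set b := Sinv * X * (star R) with hb
  -- the unit given by star R
  set u : (H →L[ℂ] H)ˣ :=
    ⟨star R, star Rinv, by rw [← star_mul, hR2, star_one], by rw [← star_mul, hR1, star_one]⟩
    with hu
  have key : star a * b = ↑u⁻¹ * (star X * X) * ↑u := by
    have h1 : star a * b = star Rinv * star X * (S * Sinv) * X * star R := by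
      simp only [ha, hb, star_mul, star_star]
      noncomm_ring
    rw [h1, hS1, mul_one]
    simp only [hu, Units.inv_mk]
    noncomm_ring
  have hspec : spectrum ℂ (star a * b) = spectrum ℂ (star X * X) := by
    rw [key]; exact spectrum.units_conjugate'
  have hrad : spectralRadius ℂ (star X * X) = spectralRadius ℂ (star a * b) := by
    unfold spectralRadius; rw [hspec]
  have hX : (‖X‖₊ * ‖X‖₊ : ℝ≥0∞) ≤ (‖a‖₊ * ‖b‖₊ : ℝ≥0) := by
    calc (‖X‖₊ * ‖X‖₊ : ℝ≥0∞) = (‖star X * X‖₊ : ℝ≥0) := by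
          rw [CStarRing.nnnorm_star_mul_self]; push_cast; ring
      _ = spectralRadius ℂ (star X * X) :=
          (IsSelfAdjoint.star_mul_self X).spectralRadius_eq_nnnorm.symm
      _ = spectralRadius ℂ (star a * b) := hrad
      _ ≤ (‖star a * b‖₊ : ℝ≥0) := spectrum.spectralRadius_le_nnnorm _
      _ ≤ (‖star a‖₊ * ‖b‖₊ : ℝ≥0) := by exact_mod_cast ENNReal.coe_le_coe.2 (nnnorm_mul_le _ _)
      _ = (‖a‖₊ * ‖b‖₊ : ℝ≥0) := by rw [nnnorm_star]
  have hX' : ‖X‖ * ‖X‖ ≤ ‖a‖ * ‖b‖ := by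
    have := ENNReal.coe_le_coe.1 (by exact_mod_cast hX : ((‖X‖₊ * ‖X‖₊ : ℝ≥0) : ℝ≥0∞) ≤ (‖a‖₊ * ‖b‖₊ : ℝ≥0))
    exact_mod_cast this
  nlinarith [norm_nonneg a, norm_nonneg b, norm_nonneg X, sq_nonneg (‖a‖ - ‖b‖)]
end

section
/- If S and R are selfadjoint bounded operators on a complex Hilbert space H, then for every bounded operator X on H, ‖S²X + XR²‖ ≥ 2‖SXR‖. -/
/-!
Put `u t = exp (-t R²) (R ξ)` and `v t = exp (-t S²) (S η)`. Then `t ↦ ⟪X (u t), v t⟫` has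
derivative `-⟪(S² X + X R²) (u t), v t⟫`, and the energy identity
`2 ∫₀ᵀ ‖exp (-t R²) (R ξ)‖² = ‖ξ‖² - ‖exp (-T R²) ξ‖²` gives `∫₀^∞ ‖u‖² ≤ ‖ξ‖² / 2`; by
monotonicity of `‖u t‖` it also gives `‖u T‖² ≤ ‖ξ‖² / (2T) → 0`. Integrating the derivative
over `[0, ∞)` and using `‖u‖ ‖v‖ ≤ (‖u‖² + ‖v‖²) / 2` yields
`‖⟪X (R ξ), S η⟫‖ ≤ ‖S² X + X R²‖ (‖ξ‖² + ‖η‖²) / 4`, and unit vectors `ξ, η` give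
`‖S X R‖ ≤ ‖S² X + X R²‖ / 2`.
-/

universe u

open NormedSpace Filter Topology intervalIntegral
open scoped InnerProductSpace

variable {E : Type u} [NormedAddCommGroup E] [InnerProductSpace ℂ E] [CompleteSpace E]

theorem exp_smul_neg_apply_comm {A B : E →L[ℂ] E} (h : Commute A B) (t : ℝ) (x : E) :
    exp (t • -A) (B x) = B (exp (t • -A) x) :=
  congr($((h.neg_left.smul_left t).exp_left) x)

theorem hasDerivAt_exp_smul_neg_apply (A : E →L[ℂ] E) (x : E) (t : ℝ) :
    HasDerivAt (fun t : ℝ => exp (t • -A) x) (-A (exp (t • -A) x)) t :=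
  ((ContinuousLinearMap.apply ℂ E x).restrictScalars ℝ).hasFDerivAt.comp_hasDerivAt t
    (hasDerivAt_exp_smul_const' (-A) t)

theorem continuous_exp_smul_neg_apply (A : E →L[ℂ] E) (x : E) :
    Continuous fun t : ℝ => exp (t • -A) x :=
  continuous_iff_continuousAt.2 fun t => (hasDerivAt_exp_smul_neg_apply A x t).continuousAt

theorem hasDerivAt_inner_exp_smul_neg (X : E →L[ℂ] E) {A B : E →L[ℂ] E} (hB : IsSelfAdjoint B)
    (x y : E) (t : ℝ) :
    HasDerivAt (fun t : ℝ => ⟪X (exp (t • -A) x), exp (t • -B) y⟫_ℂ)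
      (-⟪(B * X + X * A) (exp (t • -A) x), exp (t • -B) y⟫_ℂ) t := by
  refine (((X.restrictScalars ℝ).hasFDerivAt.comp_hasDerivAt t
    (hasDerivAt_exp_smul_neg_apply A x t)).inner ℂ
      (hasDerivAt_exp_smul_neg_apply B y t)).congr_deriv ?_
  have hsym : ∀ u v, ⟪B (X u), v⟫_ℂ = ⟪X u, B v⟫_ℂ := fun u v => hB.isSymmetric _ _
  simp only [Function.comp_apply, ContinuousLinearMap.coe_restrictScalars', map_neg,
    inner_neg_left, inner_neg_right, add_apply, mul_apply_eq_comp, inner_add_left, hsym]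
  ring

section SelfAdjoint

variable {R : E →L[ℂ] E}

theorem hasDerivAt_norm_sq_exp_smul_neg_sq_apply (hR : IsSelfAdjoint R) (x : E) (t : ℝ) :
    HasDerivAt (fun t : ℝ => ‖exp (t • -R ^ 2) x‖ ^ 2)
      (-(2 * ‖exp (t • -R ^ 2) (R x)‖ ^ 2)) t := by
  let : InnerProductSpace ℝ E := InnerProductSpace.rclikeToReal ℂ E
  convert (hasDerivAt_exp_smul_neg_apply (R ^ 2) x t).norm_sq using 1
  set y := exp (t • -R ^ 2) x
  have hRR : (R ^ 2) y = R (R y) := by rw [pow_two]; rfl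
  have hsym : ⟪y, R (R y)⟫_ℂ = ⟪R y, R y⟫_ℂ := (hR.isSymmetric y (R y)).symm
  rw [exp_smul_neg_apply_comm ((Commute.refl R).pow_left 2), real_inner_eq_re_inner ℂ,
    inner_neg_right, hRR, hsym, map_neg, inner_self_eq_norm_sq (𝕜 := ℂ)]
  ring

theorem integral_norm_sq_exp_smul_neg_sq_apply (hR : IsSelfAdjoint R) (x : E) (T : ℝ) :
    2 * ∫ t in 0..T, ‖exp (t • -R ^ 2) (R x)‖ ^ 2 = ‖x‖ ^ 2 - ‖exp (T • -R ^ 2) x‖ ^ 2 := by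
  have hcont := (continuous_exp_smul_neg_apply (R ^ 2) (R x)).norm.pow 2
  have hFTC := integral_eq_sub_of_hasDerivAt
    (fun t _ => hasDerivAt_norm_sq_exp_smul_neg_sq_apply hR x t)
    ((continuous_const.mul hcont).neg.intervalIntegrable 0 T)
  rw [integral_neg, integral_const_mul, zero_smul, exp_zero, one_apply_eq_self] at hFTC
  linarith

theorem integral_norm_sq_exp_smul_neg_sq_apply_le (hR : IsSelfAdjoint R) (x : E) (T : ℝ) :
    ∫ t in 0..T, ‖exp (t • -R ^ 2) (R x)‖ ^ 2 ≤ ‖x‖ ^ 2 / 2 := by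
  have := integral_norm_sq_exp_smul_neg_sq_apply hR x T
  nlinarith [sq_nonneg ‖exp (T • -R ^ 2) x‖]

theorem antitone_norm_exp_smul_neg_sq_apply (hR : IsSelfAdjoint R) (x : E) :
    Antitone fun t : ℝ => ‖exp (t • -R ^ 2) x‖ := by
  have hsq : Antitone fun t : ℝ => ‖exp (t • -R ^ 2) x‖ ^ 2 :=
    antitone_of_hasDerivAt_nonpos (hasDerivAt_norm_sq_exp_smul_neg_sq_apply hR x)
      fun t => neg_nonpos.2 (by positivity)
  exact fun s t hst =>
    (pow_le_pow_iff_left₀ (norm_nonneg _) (norm_nonneg _) two_ne_zero).1 (hsq hst)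

theorem norm_sq_exp_smul_neg_sq_apply_le (hR : IsSelfAdjoint R) (x : E) {T : ℝ} (hT : 0 < T) :
    ‖exp (T • -R ^ 2) (R x)‖ ^ 2 ≤ ‖x‖ ^ 2 / (2 * T) := by
  have hmono : ∫ _ in 0..T, ‖exp (T • -R ^ 2) (R x)‖ ^ 2 ≤
      ∫ t in 0..T, ‖exp (t • -R ^ 2) (R x)‖ ^ 2 :=
    integral_mono_on hT.le intervalIntegrable_const
      (((continuous_exp_smul_neg_apply _ _).norm.pow 2).intervalIntegrable 0 T)
      fun t ht => pow_le_pow_left₀ (norm_nonneg _)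
        (antitone_norm_exp_smul_neg_sq_apply hR (R x) ht.2) 2
  rw [integral_const, smul_eq_mul, sub_zero] at hmono
  rw [le_div_iff₀ (by positivity)]
  nlinarith [integral_norm_sq_exp_smul_neg_sq_apply_le hR x T]

theorem tendsto_exp_smul_neg_sq_apply (hR : IsSelfAdjoint R) (x : E) :
    Tendsto (fun t : ℝ => exp (t • -R ^ 2) (R x)) atTop (𝓝 0) := by
  have hsq : Tendsto (fun t : ℝ => ‖exp (t • -R ^ 2) (R x)‖ ^ 2) atTop (𝓝 0) := by
    refine squeeze_zero' (.of_forall fun _ => by positivity) ?_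
      ((tendsto_const_nhds.div_atTop (tendsto_id.const_mul_atTop two_pos)) :
        Tendsto (fun t : ℝ => ‖x‖ ^ 2 / (2 * t)) atTop (𝓝 0))
    filter_upwards [eventually_gt_atTop 0] with t ht
    exact norm_sq_exp_smul_neg_sq_apply_le hR x ht
  rw [tendsto_zero_iff_norm_tendsto_zero]
  simpa using hsq.sqrt

end SelfAdjoint

section InnerBound

variable {S R : E →L[ℂ] E} (X : E →L[ℂ] E) (ξ η : E)

theorem norm_inner_sub_inner_exp_smul_neg_sq_le (hS : IsSelfAdjoint S) (hR : IsSelfAdjoint R)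
    {T : ℝ} (hT : 0 ≤ T) :
    ‖⟪X (R ξ), S η⟫_ℂ - ⟪X (exp (T • -R ^ 2) (R ξ)), exp (T • -S ^ 2) (S η)⟫_ℂ‖ ≤
      ‖S ^ 2 * X + X * R ^ 2‖ * (‖ξ‖ ^ 2 + ‖η‖ ^ 2) / 4 := by
  set Z := S ^ 2 * X + X * R ^ 2
  set u := fun t : ℝ => exp (t • -R ^ 2) (R ξ)
  set v := fun t : ℝ => exp (t • -S ^ 2) (S η)
  have hu : Continuous u := continuous_exp_smul_neg_apply _ _
  have hv : Continuous v := continuous_exp_smul_neg_apply _ _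
  have hFTC : ⟪X (R ξ), S η⟫_ℂ - ⟪X (u T), v T⟫_ℂ = ∫ t in 0..T, ⟪Z (u t), v t⟫_ℂ := by
    have hZuv : Continuous fun t => ⟪Z (u t), v t⟫_ℂ := (Z.continuous.comp hu).inner hv
    have h := integral_eq_sub_of_hasDerivAt
      (fun t _ => hasDerivAt_inner_exp_smul_neg X (A := R ^ 2) (hS.pow 2) (R ξ) (S η) t)
      (hZuv.neg.intervalIntegrable 0 T)
    simp only [integral_neg, zero_smul, exp_zero, one_apply_eq_self] at h
    linear_combination h
  have hpt : ∀ t, ‖⟪Z (u t), v t⟫_ℂ‖ ≤ ‖Z‖ / 2 * (‖u t‖ ^ 2 + ‖v t‖ ^ 2) := fun t =>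
    calc ‖⟪Z (u t), v t⟫_ℂ‖ ≤ ‖Z (u t)‖ * ‖v t‖ := norm_inner_le_norm _ _
      _ ≤ ‖Z‖ * ‖u t‖ * ‖v t‖ := by gcongr; exact Z.le_opNorm _
      _ ≤ ‖Z‖ / 2 * (‖u t‖ ^ 2 + ‖v t‖ ^ 2) := by
        nlinarith [sq_nonneg (‖u t‖ - ‖v t‖), norm_nonneg Z]
  have hu2 : IntervalIntegrable (fun t => ‖u t‖ ^ 2) MeasureTheory.volume 0 T :=
    (hu.norm.pow 2).intervalIntegrable 0 T
  have hv2 : IntervalIntegrable (fun t => ‖v t‖ ^ 2) MeasureTheory.volume 0 T :=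
    (hv.norm.pow 2).intervalIntegrable 0 T
  calc ‖⟪X (R ξ), S η⟫_ℂ - ⟪X (u T), v T⟫_ℂ‖ = ‖∫ t in 0..T, ⟪Z (u t), v t⟫_ℂ‖ := by rw [hFTC]
    _ ≤ ∫ t in 0..T, ‖Z‖ / 2 * (‖u t‖ ^ 2 + ‖v t‖ ^ 2) :=
      norm_integral_le_of_norm_le hT (.of_forall fun t _ => hpt t) ((hu2.add hv2).const_mul _)
    _ = ‖Z‖ / 2 * ((∫ t in 0..T, ‖u t‖ ^ 2) + ∫ t in 0..T, ‖v t‖ ^ 2) := by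
      rw [integral_const_mul, integral_add hu2 hv2]
    _ ≤ ‖Z‖ / 2 * (‖ξ‖ ^ 2 / 2 + ‖η‖ ^ 2 / 2) := by
      gcongr
      exacts [integral_norm_sq_exp_smul_neg_sq_apply_le hR ξ T,
        integral_norm_sq_exp_smul_neg_sq_apply_le hS η T]
    _ = ‖Z‖ * (‖ξ‖ ^ 2 + ‖η‖ ^ 2) / 4 := by ring

theorem norm_inner_apply_le_norm_sq_mul_add_mul_sq (hS : IsSelfAdjoint S)
    (hR : IsSelfAdjoint R) :
    ‖⟪X (R ξ), S η⟫_ℂ‖ ≤ ‖S ^ 2 * X + X * R ^ 2‖ * (‖ξ‖ ^ 2 + ‖η‖ ^ 2) / 4 := by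
  have htail : Tendsto (fun T : ℝ => ⟪X (exp (T • -R ^ 2) (R ξ)), exp (T • -S ^ 2) (S η)⟫_ℂ)
      atTop (𝓝 0) := by
    have h := ((X.continuous.tendsto 0).comp (tendsto_exp_smul_neg_sq_apply hR ξ)).inner
      (𝕜 := ℂ) (tendsto_exp_smul_neg_sq_apply hS η)
    rwa [map_zero, inner_zero_left] at h
  have h := (tendsto_const_nhds (x := ⟪X (R ξ), S η⟫_ℂ)).sub htail
  rw [sub_zero] at h
  refine le_of_tendsto h.norm ?_
  filter_upwards [eventually_ge_atTop 0] with T hT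
  exact norm_inner_sub_inner_exp_smul_neg_sq_le X ξ η hS hR hT

end InnerBound

theorem selfadjoint_agmi (H : Type*) [NormedAddCommGroup H] [InnerProductSpace ℂ H]
    [CompleteSpace H] (S R : H →L[ℂ] H) (hS : IsSelfAdjoint S) (hR : IsSelfAdjoint R)
    (X : H →L[ℂ] H) :
    ‖S ^ 2 * X + X * R ^ 2‖ ≥ 2 * ‖S * X * R‖ := by
  have h : ‖S * X * R‖ ≤ ‖S ^ 2 * X + X * R ^ 2‖ / 2 := by
    refine ContinuousLinearMap.opNorm_le_of_re_inner_le (by positivity) fun ξ η hξ hη => ?_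
    have hadj : ⟪(S * X * R) ξ, η⟫_ℂ = ⟪X (R ξ), S η⟫_ℂ := hS.isSymmetric _ _
    calc RCLike.re ⟪(S * X * R) ξ, η⟫_ℂ ≤ ‖⟪X (R ξ), S η⟫_ℂ‖ := hadj ▸ RCLike.re_le_norm _
      _ ≤ ‖S ^ 2 * X + X * R ^ 2‖ * (‖ξ‖ ^ 2 + ‖η‖ ^ 2) / 4 :=
        norm_inner_apply_le_norm_sq_mul_add_mul_sq X ξ η hS hR
      _ = ‖S ^ 2 * X + X * R ^ 2‖ / 2 := by rw [hξ, hη]; ring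
  linarith
end

section
/- Let S be a bounded operator on a complex Hilbert space H satisfying ‖S²X + XS²‖ = 2‖SXS‖ for all bounded operators X on H, with S² ≠ 0 and ‖S‖ = 1. Then S is bounded below: ‖Sx‖ ≥ (1/3)‖x‖ for all x ∈ H. -/
/-!
Evaluating the identity on rank-one operators yields `‖S‖² ≤ ‖S²‖` and
`‖S²‖ ‖x‖ ≤ 3 ‖S‖ ‖S x‖`; together they give `‖S‖ ‖x‖ ≤ 3 ‖S x‖`.
-/

open ContinuousLinearMap InnerProductSpace

universe u v

variable {𝕜 : Type u} {E : Type v} [RCLike 𝕜] [NormedAddCommGroup E] [InnerProductSpace 𝕜 E]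

/-- Testing against `X = rankOne 𝕜 z (A z)`, for which `A X A z = ‖A z‖² • A z`. -/
theorem sq_opNorm_le_of_norm_mul_mul_le {A : E →L[𝕜] E} {C : ℝ} (hC : 0 ≤ C)
    (h : ∀ X : E →L[𝕜] E, ‖A * X * A‖ ≤ C * ‖X‖) : ‖A‖ ^ 2 ≤ C := by
  have hpoint : ∀ z, ‖A z‖ ^ 2 ≤ C * ‖z‖ ^ 2 := by
    intro z
    rcases (norm_nonneg (A z)).eq_or_lt with hAz | hAz
    · rw [← hAz, zero_pow two_ne_zero]; exact mul_nonneg hC (sq_nonneg _)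
    have hcube : ‖A z‖ ^ 2 * ‖A z‖ ≤ C * ‖z‖ ^ 2 * ‖A z‖ :=
      calc ‖A z‖ ^ 2 * ‖A z‖ = ‖(A * rankOne 𝕜 z (A z) * A) z‖ := by
            simp [norm_smul, inner_self_eq_norm_sq_to_K]
        _ ≤ ‖A * rankOne 𝕜 z (A z) * A‖ * ‖z‖ := le_opNorm _ _
        _ ≤ C * ‖rankOne 𝕜 z (A z)‖ * ‖z‖ := by gcongr; exact h _
        _ = C * ‖z‖ ^ 2 * ‖A z‖ := by rw [norm_rankOne]; ring
    exact le_of_mul_le_mul_right hcube hAz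
  have hA : ‖A‖ ≤ √C := opNorm_le_bound _ (Real.sqrt_nonneg C) fun z => by
    rw [← Real.sqrt_sq (norm_nonneg z), ← Real.sqrt_mul hC]
    exact Real.le_sqrt_of_sq_le (hpoint z)
  exact (Real.le_sqrt (norm_nonneg _) hC).mp hA

theorem norm_mul_mul_le_of_norm_eq {S : E →L[𝕜] E}
    (heq : ∀ X : E →L[𝕜] E, ‖S ^ 2 * X + X * S ^ 2‖ = 2 * ‖S * X * S‖) (X : E →L[𝕜] E) :
    ‖S * X * S‖ ≤ ‖S ^ 2‖ * ‖X‖ := by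
  have h : 2 * ‖S * X * S‖ ≤ 2 * (‖S ^ 2‖ * ‖X‖) :=
    calc 2 * ‖S * X * S‖ = ‖S ^ 2 * X + X * S ^ 2‖ := (heq X).symm
      _ ≤ ‖S ^ 2‖ * ‖X‖ + ‖X‖ * ‖S ^ 2‖ :=
          (norm_add_le _ _).trans (add_le_add (norm_mul_le _ _) (norm_mul_le _ _))
      _ = 2 * (‖S ^ 2‖ * ‖X‖) := by ring
  linarith

/-- Testing against `X = rankOne 𝕜 x (S² z)`, for which
`(S² X + X S²) z = ⟪S² z, z⟫ • S² x + ‖S² z‖² • x` while `‖S X S‖ ≤ ‖S‖ ‖S x‖ ‖S² z‖`. -/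
theorem norm_sq_apply_mul_le_of_norm_eq {S : E →L[𝕜] E}
    (heq : ∀ X : E →L[𝕜] E, ‖S ^ 2 * X + X * S ^ 2‖ = 2 * ‖S * X * S‖) (x z : E) :
    ‖(S ^ 2) z‖ * ‖x‖ ≤ 3 * ‖S‖ * ‖S x‖ * ‖z‖ := by
  set T := S ^ 2
  set X := rankOne 𝕜 x (T z)
  rcases (norm_nonneg (T z)).eq_or_lt with hTz | hTz
  · rw [← hTz, zero_mul]; positivity
  have hTx : ‖T x‖ ≤ ‖S‖ * ‖S x‖ := by simpa [T, sq] using S.le_opNorm (S x)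
  have hSXS : ‖S * X * S‖ ≤ ‖S x‖ * ‖T z‖ * ‖S‖ :=
    calc ‖S * X * S‖ ≤ ‖S * X‖ * ‖S‖ := norm_mul_le _ _
      _ = ‖S x‖ * ‖T z‖ * ‖S‖ := by rw [mul_def, comp_rankOne, norm_rankOne]
  have hEval : (T * X + X * T) z = inner 𝕜 (T z) z • T x + inner 𝕜 (T z) (T z) • x := by
    simp [X]
  have hsq : ‖T z‖ ^ 2 * ‖x‖ ≤ 3 * ‖S‖ * ‖S x‖ * ‖z‖ * ‖T z‖ :=
    calc ‖T z‖ ^ 2 * ‖x‖ = ‖inner 𝕜 (T z) (T z) • x‖ := by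
          simp [norm_smul, inner_self_eq_norm_sq_to_K]
      _ = ‖(T * X + X * T) z - inner 𝕜 (T z) z • T x‖ := by rw [hEval, add_sub_cancel_left]
      _ ≤ ‖T * X + X * T‖ * ‖z‖ + ‖T z‖ * ‖z‖ * (‖S‖ * ‖S x‖) := by
          refine (norm_sub_le _ _).trans (add_le_add (le_opNorm _ _) ?_)
          rw [norm_smul]
          exact mul_le_mul (norm_inner_le_norm _ _) hTx (norm_nonneg _) (by positivity)
      _ ≤ 2 * (‖S x‖ * ‖T z‖ * ‖S‖) * ‖z‖ + ‖T z‖ * ‖z‖ * (‖S‖ * ‖S x‖) := by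
          rw [heq X]; gcongr
      _ = 3 * ‖S‖ * ‖S x‖ * ‖z‖ * ‖T z‖ := by ring
  exact le_of_mul_le_mul_right (by linarith) hTz

theorem norm_sq_mul_le_of_norm_eq {S : E →L[𝕜] E}
    (heq : ∀ X : E →L[𝕜] E, ‖S ^ 2 * X + X * S ^ 2‖ = 2 * ‖S * X * S‖) (x : E) :
    ‖S ^ 2‖ * ‖x‖ ≤ 3 * ‖S‖ * ‖S x‖ := by
  rcases eq_or_ne x 0 with rfl | hx
  · simp
  have hxpos : 0 < ‖x‖ := norm_pos_iff.mpr hx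
  refine (le_div_iff₀ hxpos).mp (opNorm_le_bound _ (by positivity) fun z => ?_)
  rw [div_mul_eq_mul_div, le_div_iff₀ hxpos]
  exact norm_sq_apply_mul_le_of_norm_eq heq x z

theorem norm_mul_norm_le_three_mul_norm_apply_of_norm_eq {S : E →L[𝕜] E}
    (heq : ∀ X : E →L[𝕜] E, ‖S ^ 2 * X + X * S ^ 2‖ = 2 * ‖S * X * S‖) (x : E) :
    ‖S‖ * ‖x‖ ≤ 3 * ‖S x‖ := by
  rcases (norm_nonneg S).eq_or_lt with hS | hS
  · rw [← hS, zero_mul]; positivity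
  have hsq : ‖S‖ ^ 2 ≤ ‖S ^ 2‖ :=
    sq_opNorm_le_of_norm_mul_mul_le (norm_nonneg _) (norm_mul_mul_le_of_norm_eq heq)
  refine le_of_mul_le_mul_left ?_ hS
  nlinarith [norm_nonneg x, norm_sq_mul_le_of_norm_eq heq x]

theorem bounded_below_of_norm_eq_general (H : Type*) [NormedAddCommGroup H]
    [InnerProductSpace ℂ H] (S : H →L[ℂ] H)
    (hnorm : ‖S‖ = 1)
    (heq : ∀ X : H →L[ℂ] H, ‖S ^ 2 * X + X * S ^ 2‖ = 2 * ‖S * X * S‖) :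
    ∀ x : H, ‖S x‖ ≥ (1 / 3) * ‖x‖ := by
  intro x
  have h := norm_mul_norm_le_three_mul_norm_apply_of_norm_eq heq x
  rw [hnorm, one_mul] at h
  linarith

theorem bounded_below_of_norm_eq (H : Type*) [NormedAddCommGroup H]
    [InnerProductSpace ℂ H] [CompleteSpace H] (S : H →L[ℂ] H)
    (hnorm : ‖S‖ = 1) (hS2 : S ^ 2 ≠ 0)
    (heq : ∀ X : H →L[ℂ] H, ‖S ^ 2 * X + X * S ^ 2‖ = 2 * ‖S * X * S‖) :
    ∀ x : H, ‖S x‖ ≥ (1 / 3) * ‖x‖ :=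
  bounded_below_of_norm_eq_general H S hnorm heq
end

section
/- Let S be an invertible bounded operator on a complex Hilbert space H. Then for all unit vectors x, y ∈ H, sup over rank-one norm-one operators X of ‖S X S⁻¹ + S⁻¹ X S‖ ≥ 2|⟨Sx, y⟩ · ⟨S⁻¹x, y⟩|. -/
/-! Test the supremum on the rank-one operator `X = rankOne x y : z ↦ ⟪y, z⟫ • x`: for
`A = S X S⁻¹ + S⁻¹ X S` one gets `⟪y, A x⟫ = 2 ⟪y, S x⟫ ⟪y, S⁻¹ x⟫`, and `‖⟪y, A x⟫‖ ≤ ‖A‖`. -/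

open InnerProductSpace

namespace ContinuousLinearMap

variable {𝕜 E : Type*} [RCLike 𝕜]

theorem norm_mul_add_mul_le [SeminormedAddCommGroup E] [NormedSpace 𝕜 E] (S T X : E →L[𝕜] E) :
    ‖S * X * T + T * X * S‖ ≤ 2 * ‖S‖ * ‖T‖ * ‖X‖ :=
  calc ‖S * X * T + T * X * S‖ ≤ ‖S * X‖ * ‖T‖ + ‖T * X‖ * ‖S‖ :=
        (norm_add_le _ _).trans (add_le_add (norm_mul_le _ _) (norm_mul_le _ _))
    _ ≤ ‖S‖ * ‖X‖ * ‖T‖ + ‖T‖ * ‖X‖ * ‖S‖ := by gcongr <;> exact norm_mul_le _ _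
    _ = 2 * ‖S‖ * ‖T‖ * ‖X‖ := by ring

variable [NormedAddCommGroup E] [InnerProductSpace 𝕜 E]

theorem inner_mul_rankOne_mul_add_apply (S T : E →L[𝕜] E) (x y : E) :
    inner 𝕜 y ((S * rankOne 𝕜 x y * T + T * rankOne 𝕜 x y * S) x) =
      2 * (inner 𝕜 y (S x) * inner 𝕜 y (T x)) := by
  simp only [add_apply, mul_apply_eq_comp, rankOne_apply, map_smul, inner_add_right,
    inner_smul_right]
  ring

theorem norm_inner_apply_le_opNorm (A : E →L[𝕜] E) {x y : E} (hx : ‖x‖ = 1) (hy : ‖y‖ = 1) :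
    ‖inner 𝕜 y (A x)‖ ≤ ‖A‖ :=
  calc ‖inner 𝕜 y (A x)‖ ≤ ‖y‖ * (‖A‖ * ‖x‖) := by grw [norm_inner_le_norm, A.le_opNorm]
    _ = ‖A‖ := by rw [hx, hy, one_mul, mul_one]

end ContinuousLinearMap

open ContinuousLinearMap

theorem injective_norm_lower_bound_general (H : Type*) [NormedAddCommGroup H]
    [InnerProductSpace ℂ H] (S Sinv : H →L[ℂ] H)
    (x y : H) (hx : ‖x‖ = 1) (hy : ‖y‖ = 1) :
    sSup {r : ℝ | ∃ X : H →L[ℂ] H, ‖X‖ = 1 ∧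
        LinearMap.rank (X : H →ₗ[ℂ] H) = 1 ∧
        r = ‖S * X * Sinv + Sinv * X * S‖}
      ≥ 2 * ‖(inner ℂ (S x) y : ℂ) * (inner ℂ (Sinv x) y : ℂ)‖ := by
  have hx0 : x ≠ 0 := norm_ne_zero_iff.mp (by simp [hx])
  have hy0 : y ≠ 0 := norm_ne_zero_iff.mp (by simp [hy])
  have hbdd : BddAbove {r : ℝ | ∃ X : H →L[ℂ] H, ‖X‖ = 1 ∧
      LinearMap.rank (X : H →ₗ[ℂ] H) = 1 ∧ r = ‖S * X * Sinv + Sinv * X * S‖} := by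
    refine ⟨2 * ‖S‖ * ‖Sinv‖, ?_⟩
    rintro _ ⟨X, hX, -, rfl⟩
    simpa [hX] using norm_mul_add_mul_le S Sinv X
  refine le_csSup_of_le hbdd ⟨rankOne ℂ x y, by simp [hx, hy], rank_rankOne hx0 hy0, rfl⟩ ?_
  calc 2 * ‖inner ℂ (S x) y * inner ℂ (Sinv x) y‖
      = ‖inner ℂ y ((S * rankOne ℂ x y * Sinv + Sinv * rankOne ℂ x y * S) x)‖ := by
        rw [inner_mul_rankOne_mul_add_apply, norm_mul, norm_mul, norm_mul, norm_inner_symm (S x),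
          norm_inner_symm (Sinv x), RCLike.norm_two]
    _ ≤ _ := norm_inner_apply_le_opNorm _ hx hy

theorem injective_norm_lower_bound (H : Type*) [NormedAddCommGroup H]
    [InnerProductSpace ℂ H] [CompleteSpace H] (S Sinv : H →L[ℂ] H)
    (hS1 : S * Sinv = 1) (hS2 : Sinv * S = 1)
    (x y : H) (hx : ‖x‖ = 1) (hy : ‖y‖ = 1) :
    sSup {r : ℝ | ∃ X : H →L[ℂ] H, ‖X‖ = 1 ∧
        LinearMap.rank (X : H →ₗ[ℂ] H) = 1 ∧
        r = ‖S * X * Sinv + Sinv * X * S‖}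
      ≥ 2 * ‖(inner ℂ (S x) y : ℂ) * (inner ℂ (Sinv x) y : ℂ)‖ :=
  injective_norm_lower_bound_general H S Sinv x y hx hy
end

section
/- If a bounded operator S on a complex Hilbert space belongs to class A (i.e. |S²| ≥ |S|²), then S is paranormal: ‖x‖·‖S²x‖ ≥ ‖Sx‖² for every x ∈ H. -/
/-!
For `|T| = √(T*T)` one has `‖|T| x‖ = ‖T x‖`, since `|T|` is selfadjoint with `|T|² = T*T`.
Hence, if `S*S ≤ |S²|`, then `‖S x‖² = ⟪S*S x, x⟫ ≤ ⟪|S²| x, x⟫ ≤ ‖|S²| x‖ ‖x‖ = ‖S² x‖ ‖x‖`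
by Cauchy–Schwarz.
-/

open scoped InnerProductSpace
open RCLike

namespace ContinuousLinearMap

section RCLike

variable {𝕜 E : Type*} [RCLike 𝕜] [NormedAddCommGroup E] [InnerProductSpace 𝕜 E]

theorem re_inner_apply_le_of_le {A B : E →L[𝕜] E} (h : A ≤ B) (x : E) :
    re ⟪A x, x⟫_𝕜 ≤ re ⟪B x, x⟫_𝕜 := by
  have := ((le_def A B).mp h).re_inner_nonneg_left x
  rwa [sub_apply, inner_sub_left, map_sub, sub_nonneg] at this

variable [CompleteSpace E]

theorem norm_sq_apply_eq_re_inner_star_mul_self (T : E →L[𝕜] E) (x : E) :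
    ‖T x‖ ^ 2 = re ⟪(star T * T) x, x⟫_𝕜 :=
  apply_norm_sq_eq_inner_adjoint_left T x

theorem norm_apply_eq_of_star_mul_self_eq {A T : E →L[𝕜] E} (h : star A * A = star T * T)
    (x : E) : ‖A x‖ = ‖T x‖ := by
  have hsq : ‖A x‖ ^ 2 = ‖T x‖ ^ 2 := by
    rw [norm_sq_apply_eq_re_inner_star_mul_self, h, norm_sq_apply_eq_re_inner_star_mul_self]
  exact (sq_eq_sq₀ (norm_nonneg _) (norm_nonneg _)).mp hsq

end RCLike

section Complex

variable {H : Type*} [NormedAddCommGroup H] [InnerProductSpace ℂ H] [CompleteSpace H]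

theorem norm_sqrt_star_mul_self_apply (T : H →L[ℂ] H) (x : H) :
    ‖CFC.sqrt (star T * T) x‖ = ‖T x‖ := by
  refine norm_apply_eq_of_star_mul_self_eq ?_ x
  rw [(CFC.sqrt_nonneg (star T * T)).isSelfAdjoint.star_eq,
    CFC.sqrt_mul_sqrt_self _ (star_mul_self_nonneg T)]

theorem norm_sq_apply_le_of_star_mul_self_le_sqrt {S T : H →L[ℂ] H}
    (h : star S * S ≤ CFC.sqrt (star T * T)) (x : H) : ‖S x‖ ^ 2 ≤ ‖x‖ * ‖T x‖ :=
  calc ‖S x‖ ^ 2 = re ⟪(star S * S) x, x⟫_ℂ := norm_sq_apply_eq_re_inner_star_mul_self S x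
    _ ≤ re ⟪CFC.sqrt (star T * T) x, x⟫_ℂ := re_inner_apply_le_of_le h x
    _ ≤ ‖CFC.sqrt (star T * T) x‖ * ‖x‖ := re_inner_le_norm _ _
    _ = ‖x‖ * ‖T x‖ := by rw [norm_sqrt_star_mul_self_apply, mul_comm]

end Complex

end ContinuousLinearMap

set_option synthInstance.maxHeartbeats 1000000 in
theorem classA_paranormal (H : Type*) [NormedAddCommGroup H]
    [InnerProductSpace ℂ H] [CompleteSpace H] (S : H →L[ℂ] H)
    (hA : (star S) * S ≤ CFC.sqrt ((star (S ^ 2)) * S ^ 2)) :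
    ∀ x : H, ‖x‖ * ‖(S ^ 2) x‖ ≥ ‖S x‖ ^ 2 :=
  ContinuousLinearMap.norm_sq_apply_le_of_star_mul_self_le_sqrt hA
end

section
/- Let S be a bounded operator on a complex Hilbert space H such that ‖S²x‖·‖y‖ + ‖x‖·‖S*²y‖ = 2‖Sx‖·‖S*y‖ for all x, y ∈ H, and S² ≠ 0. Then S and S* are injective. -/
theorem injective_of_norm_identity (H : Type*) [NormedAddCommGroup H]
    [InnerProductSpace ℂ H] [CompleteSpace H] (S : H →L[ℂ] H) (hS2 : S ^ 2 ≠ 0)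
    (heq : ∀ x y : H,
      ‖(S ^ 2) x‖ * ‖y‖ + ‖x‖ * ‖((star S ^ 2 : H →L[ℂ] H)) y‖
        = 2 * ‖S x‖ * ‖(star S : H →L[ℂ] H) y‖) :
    Function.Injective S ∧ Function.Injective (star S : H →L[ℂ] H) := by
  have hS2' : star S ^ 2 ≠ (0 : H →L[ℂ] H) := by
    intro h
    apply hS2
    have := congrArg star h
    simpa [star_pow] using this
  constructor
  · intro x x' hxx
    rw [← sub_eq_zero] at hxx ⊢; rw [← map_sub] at hxx
    set z := x - x' with hz
    by_contra hzne
    have hkey : ∀ y : H, ‖z‖ * ‖(star S ^ 2 : H →L[ℂ] H) y‖ = 0 := by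
      intro y
      have h := heq z y
      have h1 : (S ^ 2) z = 0 := by
        have : (S ^ 2) z = S (S z) := by simp [pow_two]
        rw [this, hxx, map_zero]
      rw [h1, hxx] at h
      simpa using h
    apply hS2'
    ext y
    have := hkey y
    rcases mul_eq_zero.1 this with h | h
    · exact absurd (norm_eq_zero.1 h) hzne
    · simpa using norm_eq_zero.1 h
  · intro y y' hyy
    rw [← sub_eq_zero] at hyy ⊢; rw [← map_sub] at hyy
    set z := y - y' with hz
    by_contra hzne
    have hkey : ∀ x : H, ‖(S ^ 2) x‖ * ‖z‖ = 0 := by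
      intro x
      have h := heq x z
      have h1 : (star S ^ 2 : H →L[ℂ] H) z = 0 := by
        have : (star S ^ 2 : H →L[ℂ] H) z = (star S : H →L[ℂ] H) ((star S : H →L[ℂ] H) z) := by
          simp [pow_two]
        rw [this, hyy, map_zero]
      rw [h1, hyy] at h
      simpa using h
    apply hS2
    ext x
    have := hkey x
    rcases mul_eq_zero.1 this with h | h
    · simpa using norm_eq_zero.1 h
    · exact absurd (norm_eq_zero.1 h) hzne
end
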